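/- arXiv:1405.2456 — 4 statements merged into one kernel-verified Lean document; each statement's English description precedes it below -/
import Mathlib

section
/- For u ≥ 1, r > 0, and δ > 0, the function F_{u,δ}(r²) = δ^{1-u/2} e^{-δ²/2} ∫_0^r x^{u/2} e^{-x²/2} I_{u/2-1}(δx) dx satisfies d/dδ F_{u,δ}(r²) = - r^{u/2} δ^{1-u/2} e^{-(r²+δ²)/2} I_{u/2}(rδ). -/
/-!
Write `I_w(y) = (y/2)^w S_w(y²/4)` with the entire series `S_w(t) = ∑ tᵐ / (m! Γ(m+w+1))`
(`besselSeries`), which satisfies `S_w' = S_{w+1}` and `S_{w-1} = w S_w + t S_{w+1}`. Then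
`F_{u,δ}(r²) = 2^{1-u/2} ∫_0^r k(δ,x) dx` with
`k(δ,x) = e^{-(δ²+x²)/2} x^{u-1} S_{u/2-1}(δ²x²/4)` (`chiSqKernel`) jointly smooth, so one may
differentiate under the integral sign. The recurrence turns `∂_δ k` into the `x`-derivative of
`-(δ/2) e^{-(δ²+x²)/2} x^u S_{u/2}(δ²x²/4)`, and the fundamental theorem of calculus evaluates
the integral of `∂_δ k` as this function at `x = r`.
-/

/-- The modified Bessel function of the first kind of order `w`. -/
noncomputable def besselI (w x : ℝ) : ℝ :=
  ∑' m : ℕ, (x / 2) ^ (w + 2 * (m : ℝ)) / ((m.factorial : ℝ) * Real.Gamma ((m : ℝ) + w + 1))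

/-- The noncentral chi-square cdf at `r²` (as a function of the noncentrality `δ`),
`F_{u,δ}(r²) = δ^{1-u/2} e^{-δ²/2} ∫_0^r x^{u/2} e^{-x²/2} I_{u/2-1}(δx) dx`. -/
noncomputable def ncChiSqAtSq (u δ r : ℝ) : ℝ :=
  δ ^ (1 - u / 2) * Real.exp (-δ ^ 2 / 2) *
    ∫ x in (0:ℝ)..r, x ^ (u / 2) * Real.exp (-x ^ 2 / 2) * besselI (u / 2 - 1) (δ * x)

open Real Set MeasureTheory
open scoped Nat

/-- Also at the poles `s ∈ -ℕ`, where Mathlib's `Gamma` takes the value `0`. -/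
theorem Real.inv_Gamma_eq_mul_inv_Gamma_add_one (s : ℝ) :
    (Gamma s)⁻¹ = s * (Gamma (s + 1))⁻¹ := by
  rcases eq_or_ne s 0 with rfl | hs
  · simp
  · rw [Gamma_add_one hs, mul_inv, mul_inv_cancel_left₀ hs]

noncomputable def besselSeries (w t : ℝ) : ℝ :=
  ∑' m : ℕ, t ^ m / ((m ! : ℝ) * Gamma (m + w + 1))

theorem summable_besselSeries (w t : ℝ) :
    Summable fun m : ℕ => t ^ m / ((m ! : ℝ) * Gamma (m + w + 1)) := by
  refine (Real.summable_pow_div_factorial |t|).of_norm_bounded_eventually_nat ?_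
  filter_upwards [tendsto_natCast_atTop_atTop.eventually_ge_atTop (1 - w)] with m hm
  have hΓ : 1 ≤ Gamma (m + w + 1) := Gamma_two.symm.trans_le <|
    Gamma_strictMonoOn_Ici.monotoneOn self_mem_Ici (by rw [mem_Ici]; linarith) (by linarith)
  rw [norm_div, norm_mul, norm_pow, norm_of_nonneg (zero_le_one.trans hΓ), Real.norm_natCast,
    Real.norm_eq_abs]
  exact div_le_div_of_nonneg_left (by positivity) (by positivity) (le_mul_of_one_le_right
    (by positivity) hΓ)

theorem hasSum_mul_pow_pred_div_factorial_mul_Gamma (w y : ℝ) :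
    HasSum (fun m : ℕ => m * y ^ (m - 1) / ((m ! : ℝ) * Gamma (m + w + 1)))
      (besselSeries (w + 1) y) := by
  have hterm : ∀ m : ℕ, ((m + 1 : ℕ) : ℝ) * y ^ (m + 1 - 1) /
      (((m + 1)! : ℝ) * Gamma ((m + 1 : ℕ) + w + 1)) =
        y ^ m / ((m ! : ℝ) * Gamma (m + (w + 1) + 1)) := by
    intro m
    rw [Nat.factorial_succ, Nat.add_sub_cancel]
    push_cast
    rw [mul_assoc, mul_div_mul_left _ _ (by positivity)]
    ring_nf
  refine (hasSum_nat_add_iff' 1).1 ?_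
  simp only [hterm, Finset.range_one, Finset.sum_singleton, CharP.cast_eq_zero, zero_mul, zero_div,
    sub_zero]
  exact (summable_besselSeries (w + 1) y).hasSum

theorem hasDerivAt_besselSeries (w t : ℝ) :
    HasDerivAt (besselSeries w) (besselSeries (w + 1) t) t := by
  set c : ℕ → ℝ := fun m => (m ! : ℝ) * Gamma (m + w + 1)
  set R := |t| + 1 with hR
  have hRpos : 0 < R := by positivity
  have hsum := (hasSum_mul_pow_pred_div_factorial_mul_Gamma w R).summable.abs
  rw [← (hasSum_mul_pow_pred_div_factorial_mul_Gamma w t).tsum_eq]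
  change HasDerivAt (fun y => ∑' m : ℕ, y ^ m / c m) _ t
  refine hasDerivAt_tsum_of_isPreconnected (g' := fun m y => m * y ^ (m - 1) / c m) hsum
    (t := Ioo (-R) R) isOpen_Ioo isPreconnected_Ioo
    (fun m y _ => (hasDerivAt_pow m y).div_const (c m))
    (fun m y hy => ?_) (y₀ := 0) (by rw [mem_Ioo, hR]; constructor <;> linarith [abs_nonneg t])
    (summable_besselSeries w 0)
    (by rw [mem_Ioo, hR]; constructor <;> linarith [neg_abs_le t, le_abs_self t])
  change |m * y ^ (m - 1) / c m| ≤ |m * R ^ (m - 1) / c m|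
  rw [abs_div, abs_div]
  refine div_le_div_of_nonneg_right ?_ (abs_nonneg _)
  rw [abs_mul, abs_mul, abs_pow, abs_pow, abs_of_pos hRpos]
  exact mul_le_mul_of_nonneg_left (pow_le_pow_left₀ (abs_nonneg y)
    (abs_le.2 ⟨hy.1.le, hy.2.le⟩) _) (abs_nonneg _)

theorem besselSeries_sub_one (w t : ℝ) :
    besselSeries (w - 1) t = w * besselSeries w t + t * besselSeries (w + 1) t := by
  have hterm : ∀ m : ℕ, t ^ m / ((m ! : ℝ) * Gamma (m + (w - 1) + 1)) =
      w * (t ^ m / ((m ! : ℝ) * Gamma (m + w + 1))) +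
        t * (m * t ^ (m - 1) / ((m ! : ℝ) * Gamma (m + w + 1))) := by
    intro m
    have hpow : t * (m * t ^ (m - 1)) = m * t ^ m := by
      cases m with
      | zero => simp
      | succ n => rw [Nat.add_sub_cancel, pow_succ]; ring
    rw [mul_div_assoc', mul_div_assoc', hpow, ← add_div, ← add_mul, div_eq_mul_inv,
      div_eq_mul_inv, mul_inv, mul_inv, show (m : ℝ) + (w - 1) + 1 = m + w by ring,
      inv_Gamma_eq_mul_inv_Gamma_add_one (m + w)]
    ring
  rw [besselSeries, tsum_congr hterm]
  exact (((summable_besselSeries w t).hasSum.mul_left w).add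
    ((hasSum_mul_pow_pred_div_factorial_mul_Gamma w t).mul_left t)).tsum_eq

theorem continuous_besselSeries (w : ℝ) : Continuous (besselSeries w) :=
  continuous_iff_continuousAt.2 fun t => (hasDerivAt_besselSeries w t).continuousAt

theorem besselI_eq_rpow_mul_besselSeries (w : ℝ) {y : ℝ} (hy : 0 < y) :
    besselI w y = (y / 2) ^ w * besselSeries w (y ^ 2 / 4) := by
  rw [besselI, besselSeries, ← tsum_mul_left]
  refine tsum_congr fun m => ?_
  rw [rpow_add (by positivity), mul_div_assoc,
    show (2 * (m : ℝ)) = ((2 * m : ℕ) : ℝ) by push_cast; ring, rpow_natCast, pow_mul]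
  ring

theorem hasDerivAt_intervalIntegral_of_continuous_uncurry_deriv
    {E : Type*} [NormedAddCommGroup E] [NormedSpace ℝ E] {F F' : ℝ → ℝ → E} {a b t₀ : ℝ}
    (hF : ∀ t, Continuous (F t)) (hF' : Continuous (Function.uncurry F'))
    (hderiv : ∀ t x, HasDerivAt (F · x) (F' t x) t) :
    HasDerivAt (fun t => ∫ x in a..b, F t x) (∫ x in a..b, F' t₀ x) t₀ := by
  obtain ⟨C, hC⟩ := ((isCompact_closedBall t₀ 1).prod
    (isCompact_uIcc (a := a) (b := b))).exists_bound_of_continuousOn hF'.continuousOn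
  exact (intervalIntegral.hasDerivAt_integral_of_dominated_loc_of_deriv_le (bound := fun _ => C)
    (Metric.closedBall_mem_nhds t₀ one_pos) (.of_forall fun t => (hF t).aestronglyMeasurable)
    ((hF t₀).intervalIntegrable a b)
    (hF'.comp (Continuous.prodMk_right t₀)).aestronglyMeasurable
    (ae_of_all _ fun x hx t ht => hC (t, x) ⟨ht, uIoc_subset_uIcc hx⟩) intervalIntegrable_const
    (ae_of_all _ fun x _ t _ => hderiv t x)).2

theorem hasDerivAt_exp_neg_sq_div_two (x : ℝ) :
    HasDerivAt (fun x => exp (-x ^ 2 / 2)) (-x * exp (-x ^ 2 / 2)) x :=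
  ((hasDerivAt_pow 2 x).neg.div_const 2).exp.congr_deriv (by simp; ring)

noncomputable def chiSqKernel (u δ x : ℝ) : ℝ :=
  exp (-δ ^ 2 / 2) * (x ^ (u - 1) * exp (-x ^ 2 / 2) *
    besselSeries (u / 2 - 1) (δ ^ 2 * x ^ 2 / 4))

noncomputable def chiSqKernelDeriv (u δ x : ℝ) : ℝ :=
  δ * exp (-δ ^ 2 / 2) * (x ^ (u - 1) * exp (-x ^ 2 / 2)) *
    (x ^ 2 / 2 * besselSeries (u / 2) (δ ^ 2 * x ^ 2 / 4) -
      besselSeries (u / 2 - 1) (δ ^ 2 * x ^ 2 / 4))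

theorem ncChiSqAtSq_eq_integral_chiSqKernel {u δ r : ℝ} (hδ : 0 < δ) (hr : 0 ≤ r) :
    ncChiSqAtSq u δ r = 2 ^ (1 - u / 2) * ∫ x in (0 : ℝ)..r, chiSqKernel u δ x := by
  rw [ncChiSqAtSq, ← intervalIntegral.integral_const_mul, ← intervalIntegral.integral_const_mul,
    intervalIntegral.integral_of_le hr, intervalIntegral.integral_of_le hr]
  refine setIntegral_congr_fun measurableSet_Ioc fun x hx => ?_
  have hx : 0 < x := hx.1
  rw [besselI_eq_rpow_mul_besselSeries _ (by positivity), chiSqKernel,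
    div_rpow (by positivity) zero_le_two, mul_rpow hδ.le hx.le, mul_pow,
    show u - 1 = u / 2 + (u / 2 - 1) by ring, rpow_add hx,
    show 1 - u / 2 = -(u / 2 - 1) by ring, rpow_neg hδ.le, rpow_neg zero_le_two]
  field_simp

theorem hasDerivAt_chiSqKernel (u δ x : ℝ) :
    HasDerivAt (chiSqKernel u · x) (chiSqKernelDeriv u δ x) δ := by
  have hbessel := hasDerivAt_besselSeries (u / 2 - 1) (δ ^ 2 * x ^ 2 / 4)
  rw [sub_add_cancel] at hbessel
  have hinner : HasDerivAt (fun d => d ^ 2 * x ^ 2 / 4) (δ * x ^ 2 / 2) δ :=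
    ((hasDerivAt_pow 2 δ).mul_const (x ^ 2)).div_const 4 |>.congr_deriv (by ring)
  refine ((hasDerivAt_exp_neg_sq_div_two δ).mul
    ((hbessel.comp δ hinner).const_mul (x ^ (u - 1) * exp (-x ^ 2 / 2)))).congr_deriv ?_
  simp only [chiSqKernelDeriv, Function.comp_apply]
  ring

theorem continuous_chiSqKernel {u : ℝ} (hu : 1 ≤ u) (δ : ℝ) : Continuous (chiSqKernel u δ) := by
  have := continuous_besselSeries (u / 2 - 1)
  unfold chiSqKernel
  fun_prop (disch := linarith)

theorem continuous_uncurry_chiSqKernelDeriv {u : ℝ} (hu : 1 ≤ u) :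
    Continuous (Function.uncurry (chiSqKernelDeriv u)) := by
  have := continuous_besselSeries (u / 2 - 1)
  have := continuous_besselSeries (u / 2)
  unfold chiSqKernelDeriv Function.uncurry
  fun_prop (disch := linarith)

theorem hasDerivAt_primitive_chiSqKernelDeriv {u δ x : ℝ} (hx : 0 < x) :
    HasDerivAt (fun x => -(δ / 2) * exp (-δ ^ 2 / 2) *
        (x ^ u * exp (-x ^ 2 / 2) * besselSeries (u / 2) (δ ^ 2 * x ^ 2 / 4)))
      (chiSqKernelDeriv u δ x) x := by
  have hinner : HasDerivAt (fun x => δ ^ 2 * x ^ 2 / 4) (δ ^ 2 * x / 2) x :=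
    ((hasDerivAt_pow 2 x).const_mul (δ ^ 2)).div_const 4 |>.congr_deriv (by ring)
  have hxu : x ^ u = x ^ (u - 1) * x := by
    rw [← rpow_add_one hx.ne', sub_add_cancel]
  refine ((((hasDerivAt_rpow_const (p := u) (Or.inl hx.ne')).mul
    (hasDerivAt_exp_neg_sq_div_two x)).mul ((hasDerivAt_besselSeries (u / 2) _).comp x
      hinner)).const_mul (-(δ / 2) * exp (-δ ^ 2 / 2))).congr_deriv ?_
  simp only [chiSqKernelDeriv, Function.comp_apply, Pi.mul_apply]
  rw [besselSeries_sub_one, hxu]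
  ring

theorem integral_chiSqKernelDeriv {u : ℝ} (hu : 1 ≤ u) (δ : ℝ) {r : ℝ} (hr : 0 ≤ r) :
    ∫ x in (0 : ℝ)..r, chiSqKernelDeriv u δ x =
      -(δ / 2) * exp (-δ ^ 2 / 2) *
        (r ^ u * exp (-r ^ 2 / 2) * besselSeries (u / 2) (δ ^ 2 * r ^ 2 / 4)) := by
  have := continuous_besselSeries (u / 2)
  rw [intervalIntegral.integral_eq_sub_of_hasDerivAt_of_le hr (by fun_prop (disch := linarith))
    (fun x hx => hasDerivAt_primitive_chiSqKernelDeriv hx.1)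
    (((continuous_uncurry_chiSqKernelDeriv hu).comp (Continuous.prodMk_right δ)).intervalIntegrable
      _ _)]
  simp [zero_rpow (by linarith : u ≠ 0)]

/-- For `u ≥ 1`, `r > 0`, `δ > 0`,
`d/dδ F_{u,δ}(r²) = - r^{u/2} δ^{1-u/2} e^{-(r²+δ²)/2} I_{u/2}(rδ)`. -/
theorem deriv_ncChiSqAtSq (u r δ : ℝ) (hu : 1 ≤ u) (hr : 0 < r) (hδ : 0 < δ) :
    HasDerivAt (fun d => ncChiSqAtSq u d r)
      (-(r ^ (u / 2) * δ ^ (1 - u / 2) * Real.exp (-(r ^ 2 + δ ^ 2) / 2) *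
        besselI (u / 2) (r * δ))) δ := by
  have hF : (fun d => 2 ^ (1 - u / 2) * ∫ x in (0 : ℝ)..r, chiSqKernel u d x) =ᶠ[nhds δ]
      fun d => ncChiSqAtSq u d r :=
    (eventually_gt_nhds hδ).mono fun d hd => (ncChiSqAtSq_eq_integral_chiSqKernel hd hr.le).symm
  have hpow : r ^ (u / 2) * δ ^ (1 - u / 2) * (r * δ / 2) ^ (u / 2) =
      2 ^ (1 - u / 2) * (δ / 2) * r ^ u := by
    have hr2 : r ^ u = r ^ (u / 2) * r ^ (u / 2) := by rw [← rpow_add hr, add_halves]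
    rw [hr2, div_rpow (by positivity) zero_le_two, mul_rpow hr.le hδ.le, sub_eq_add_neg,
      rpow_add two_pos, rpow_add hδ, rpow_one, rpow_one, rpow_neg zero_le_two, rpow_neg hδ.le]
    field_simp
  refine ((hasDerivAt_intervalIntegral_of_continuous_uncurry_deriv (continuous_chiSqKernel hu)
    (continuous_uncurry_chiSqKernelDeriv hu) (hasDerivAt_chiSqKernel u)).const_mul
      _).congr_of_eventuallyEq hF.symm |>.congr_deriv ?_
  rw [integral_chiSqKernelDeriv hu δ hr.le, besselI_eq_rpow_mul_besselSeries _ (by positivity),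
    neg_add, add_div, exp_add, mul_pow, mul_comm (r ^ 2)]
  linear_combination exp (-r ^ 2 / 2) * exp (-δ ^ 2 / 2) *
    besselSeries (u / 2) (δ ^ 2 * r ^ 2 / 4) * hpow
end

section
/- For fixed u ≥ 1 and r > 0, the noncentral chi-square cdf value F_{u,δ}(r²) is a strictly decreasing function of the noncentrality parameter δ on (0, ∞). -/
/-!
Summing the power series of `I_{u/2-1}` under the integral sign exhibits `F_{u,δ}(r²)` as a
Poisson mixture: with `λ = δ²/2` and `G_k(r) = P(χ²_k ≤ r²)` (the integral over `[0, r]` of the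
density of the chi distribution with `k` degrees of freedom),
`F_{u,δ}(r²) = ∑ₘ e^{-λ} λ^m / m! · G_{u+2m}(r)`.
An integration by parts gives `G_{k+2}(r) < G_k(r)`, so `m ↦ G_{u+2m}(r)` is strictly decreasing.
Finally, since `Po(λ + μ) = Po(λ) ∗ Po(μ)`, increasing the rate shifts Poisson mass to larger
integers, which strictly lowers the expectation of a strictly decreasing bounded sequence.
-/

open Real MeasureTheory ProbabilityTheory Set
open scoped NNReal Nat

theorem integral_lt_integral_of_le_of_lt_of_measure_singleton_ne_zero {α : Type*}
    [MeasurableSpace α] {μ : Measure α} {f g : α → ℝ} (hf : Integrable f μ) (hg : Integrable g μ)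
    (hle : f ≤ g) {x : α} (hlt : f x < g x) (hx : μ {x} ≠ 0) :
    ∫ y, f y ∂μ < ∫ y, g y ∂μ := by
  rw [← sub_pos, ← integral_sub hg hf,
    integral_pos_iff_support_of_nonneg (fun y => sub_nonneg.2 (hle y)) (hg.sub hf)]
  refine (pos_iff_ne_zero.2 hx).trans_le (measure_mono ?_)
  simpa using (sub_pos.2 hlt).ne'

theorem integrable_of_forall_norm_le {α : Type*} [MeasurableSpace α] [DiscreteMeasurableSpace α]
    [Countable α] {E : Type*} [NormedAddCommGroup E] {μ : Measure α} [IsFiniteMeasure μ]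
    {f : α → E} {C : ℝ} (hC : ∀ x, ‖f x‖ ≤ C) :
    Integrable f μ :=
  .of_bound .of_discrete C (.of_forall hC)

theorem Antitone.exists_forall_norm_le {a : ℕ → ℝ} (ha : Antitone a) (hb : BddBelow (range a)) :
    ∃ C, ∀ n, ‖a n‖ ≤ C := by
  obtain ⟨L, hL⟩ := hb
  refine ⟨|L| + |a 0|, fun n => abs_le.2 ⟨?_, ?_⟩⟩
  · linarith [hL ⟨n, rfl⟩, neg_abs_le L, abs_nonneg (a 0)]
  · linarith [ha (Nat.zero_le n), le_abs_self (a 0), abs_nonneg L]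

theorem poissonMeasure_singleton_ne_zero {r : ℝ≥0} {n : ℕ} (h : 0 < r ∨ n = 0) :
    Po(r) {n} ≠ 0 := by
  rw [poissonMeasure_singleton, ne_eq, ENNReal.ofReal_eq_zero, not_le]
  rcases h with h | rfl
  · positivity
  · simp [exp_pos]

theorem strictAnti_integral_poissonMeasure {a : ℕ → ℝ} (ha : StrictAnti a)
    (hb : BddBelow (range a)) : StrictAnti fun r : ℝ≥0 => ∫ n, a n ∂Po(r) := by
  obtain ⟨C, hC⟩ := ha.antitone.exists_forall_norm_le hb
  intro r s hrs
  obtain ⟨t, ht, rfl⟩ : ∃ t, 0 < t ∧ s = r + t :=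
    ⟨s - r, tsub_pos_of_lt hrs, (add_tsub_cancel_of_le hrs.le).symm⟩
  have hshift : ∀ j, ∫ k, a (j + k) ∂Po(t) < a j := fun j => by
    calc ∫ k, a (j + k) ∂Po(t) < ∫ _, a j ∂Po(t) :=
          integral_lt_integral_of_le_of_lt_of_measure_singleton_ne_zero
            (integrable_of_forall_norm_le fun k => hC _) (integrable_const _)
            (fun k => ha.antitone (Nat.le_add_right j k)) (ha (Nat.lt_add_one j))
            (poissonMeasure_singleton_ne_zero (Or.inl ht))
      _ = a j := by simp
  simp only
  rw [← poissonMeasure_conv_poissonMeasure, integral_conv (integrable_of_forall_norm_le hC)]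
  exact integral_lt_integral_of_le_of_lt_of_measure_singleton_ne_zero
    (integrable_of_forall_norm_le fun j =>
      norm_integral_le_of_norm_le_const (.of_forall fun k => hC _))
    (integrable_of_forall_norm_le hC) (fun j => (hshift j).le) (hshift 0)
    (poissonMeasure_singleton_ne_zero (Or.inr rfl))

theorem continuous_rpow_mul_exp_neg_sq {p : ℝ} (hp : 0 ≤ p) :
    Continuous fun x : ℝ => x ^ p * exp (-x ^ 2 / 2) := by
  fun_prop (disch := exact Or.inr hp)

theorem hasDerivAt_rpow_mul_exp_neg_sq {p : ℝ} (hp : 1 ≤ p) (x : ℝ) :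
    HasDerivAt (fun y : ℝ => y ^ p * exp (-y ^ 2 / 2))
      (p * (x ^ (p - 1) * exp (-x ^ 2 / 2)) - x ^ (p + 1) * exp (-x ^ 2 / 2)) x := by
  have hexp : HasDerivAt (fun y : ℝ => exp (-y ^ 2 / 2)) (exp (-x ^ 2 / 2) * -x) x :=
    ((hasDerivAt_pow 2 x).fun_neg.div_const 2).exp.congr_deriv (by ring)
  refine ((hasDerivAt_rpow_const (Or.inr hp)).mul hexp).congr_deriv ?_
  rcases eq_or_ne x 0 with rfl | hx
  · simp [zero_rpow (by linarith : p + 1 ≠ 0), zero_rpow (by linarith : p ≠ 0)]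
  · rw [rpow_add_one hx]
    ring

theorem integral_rpow_add_one_mul_exp_neg_sq {p : ℝ} (hp : 1 ≤ p) (r : ℝ) :
    ∫ x in (0 : ℝ)..r, x ^ (p + 1) * exp (-x ^ 2 / 2) =
      p * (∫ x in (0 : ℝ)..r, x ^ (p - 1) * exp (-x ^ 2 / 2)) - r ^ p * exp (-r ^ 2 / 2) := by
  have hint : ∀ q : ℝ, 0 ≤ q →
      IntervalIntegrable (fun x : ℝ => x ^ q * exp (-x ^ 2 / 2)) volume 0 r :=
    fun q hq => (continuous_rpow_mul_exp_neg_sq hq).intervalIntegrable _ _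
  have hftc : ∫ x in (0 : ℝ)..r,
      p * (x ^ (p - 1) * exp (-x ^ 2 / 2)) - x ^ (p + 1) * exp (-x ^ 2 / 2) =
        r ^ p * exp (-r ^ 2 / 2) - 0 ^ p * exp (-0 ^ 2 / 2) :=
    intervalIntegral.integral_eq_sub_of_hasDerivAt
      (fun x _ => hasDerivAt_rpow_mul_exp_neg_sq hp x)
      (((hint _ (by linarith)).const_mul p).sub (hint _ (by linarith)))
  rw [intervalIntegral.integral_sub ((hint _ (by linarith)).const_mul p) (hint _ (by linarith)),
    intervalIntegral.integral_const_mul, zero_rpow (by linarith : p ≠ 0), zero_mul,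
    sub_zero] at hftc
  linarith

noncomputable def chiPDFReal (k x : ℝ) : ℝ :=
  2 ^ (1 - k / 2) / Gamma (k / 2) * (x ^ (k - 1) * exp (-x ^ 2 / 2))

noncomputable def chiCDFReal (k r : ℝ) : ℝ := ∫ x in (0 : ℝ)..r, chiPDFReal k x

theorem chiPDFReal_nonneg {k x : ℝ} (hk : 0 < k) (hx : 0 ≤ x) : 0 ≤ chiPDFReal k x := by
  have := Gamma_pos_of_pos (half_pos hk)
  unfold chiPDFReal
  positivity

theorem continuous_chiPDFReal {k : ℝ} (hk : 1 ≤ k) : Continuous (chiPDFReal k) :=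
  (continuous_rpow_mul_exp_neg_sq (by linarith)).const_mul _

theorem chiCDFReal_nonneg {k r : ℝ} (hk : 0 < k) (hr : 0 ≤ r) : 0 ≤ chiCDFReal k r :=
  intervalIntegral.integral_nonneg hr fun _ hx => chiPDFReal_nonneg hk hx.1

theorem chiCDFReal_sub_chiCDFReal_add_two {k : ℝ} (hk : 1 ≤ k) (r : ℝ) :
    chiCDFReal k r - chiCDFReal (k + 2) r =
      2 ^ (1 - k / 2) / (k * Gamma (k / 2)) * (r ^ k * exp (-r ^ 2 / 2)) := by
  have hΓ : Gamma ((k + 2) / 2) = k / 2 * Gamma (k / 2) := by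
    rw [show (k + 2) / 2 = k / 2 + 1 by ring, Gamma_add_one (by positivity)]
  have h2 : (2 : ℝ) ^ (1 - (k + 2) / 2) = 2 ^ (1 - k / 2) / 2 := by
    rw [show 1 - (k + 2) / 2 = 1 - k / 2 - 1 by ring, rpow_sub_one two_ne_zero]
  simp only [chiCDFReal, chiPDFReal, intervalIntegral.integral_const_mul]
  rw [show k + 2 - 1 = k + 1 by ring, integral_rpow_add_one_mul_exp_neg_sq hk, hΓ, h2]
  field_simp
  ring

theorem chiCDFReal_add_two_lt {k r : ℝ} (hk : 1 ≤ k) (hr : 0 < r) :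
    chiCDFReal (k + 2) r < chiCDFReal k r := by
  have hΓpos := Gamma_pos_of_pos (by positivity : 0 < k / 2)
  have hgap : 0 < 2 ^ (1 - k / 2) / (k * Gamma (k / 2)) * (r ^ k * exp (-r ^ 2 / 2)) := by
    positivity
  linarith [chiCDFReal_sub_chiCDFReal_add_two hk r]

theorem strictAnti_chiCDFReal_add_two_mul {k r : ℝ} (hk : 1 ≤ k) (hr : 0 < r) :
    StrictAnti fun m : ℕ => chiCDFReal (k + 2 * m) r :=
  strictAnti_nat_of_succ_lt fun m => by
    have hkm : 1 ≤ k + 2 * m := by linarith [m.cast_nonneg (α := ℝ)]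
    rw [Nat.cast_succ, mul_add_one, ← add_assoc]
    exact chiCDFReal_add_two_lt hkm hr

theorem bddBelow_range_chiCDFReal_add_two_mul {k r : ℝ} (hk : 0 < k) (hr : 0 ≤ r) :
    BddBelow (range fun m : ℕ => chiCDFReal (k + 2 * m) r) :=
  ⟨0, forall_mem_range.2 fun _ => chiCDFReal_nonneg (by positivity) hr⟩

theorem intervalIntegral_tsum_of_nonneg {F : ℕ → ℝ → ℝ} {a b : ℝ} (hab : a ≤ b)
    (hint : ∀ m, IntervalIntegrable (F m) volume a b) (hnn : ∀ m, ∀ x ∈ Ioc a b, 0 ≤ F m x)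
    (hsum : Summable fun m => ∫ x in a..b, F m x) :
    ∫ x in a..b, ∑' m, F m x = ∑' m, ∫ x in a..b, F m x := by
  simp only [intervalIntegral.integral_of_le hab] at hsum ⊢
  refine (integral_tsum_of_summable_integral_norm (fun m => (hint m).1) ?_).symm
  refine hsum.congr fun m => setIntegral_congr_fun measurableSet_Ioc fun x hx => ?_
  exact (norm_of_nonneg (hnn m x hx)).symm

theorem besselI_summand_eq_poisson_mul_chiPDFReal {u δ x : ℝ} (hδ : 0 < δ) (hx : 0 < x)
    (m : ℕ) :
    δ ^ (1 - u / 2) * exp (-δ ^ 2 / 2) * (x ^ (u / 2) * exp (-x ^ 2 / 2) *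
      ((δ * x / 2) ^ (u / 2 - 1 + 2 * (m : ℝ)) / (m ! * Gamma (m + (u / 2 - 1) + 1)))) =
    exp (-(δ ^ 2 / 2)) * (δ ^ 2 / 2) ^ m / m ! * chiPDFReal (u + 2 * m) x := by
  set t := u / 2 - 1 + 2 * (m : ℝ)
  have hδt : δ ^ (1 - u / 2) = (δ ^ 2) ^ m / δ ^ t := by
    rw [show 1 - u / 2 = ((2 * m : ℕ) : ℝ) - t by push_cast; ring, rpow_sub hδ, rpow_natCast,
      pow_mul]
  have h2t : (2 : ℝ) ^ (1 - (u + 2 * m) / 2) = 2 ^ m / 2 ^ t := by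
    rw [show 1 - (u + 2 * m) / 2 = (m : ℝ) - t by ring, rpow_sub two_pos, rpow_natCast]
  have hxt : x ^ (u + 2 * m - 1) = x ^ (u / 2) * x ^ t := by
    rw [← rpow_add hx]
    congr 1
    ring
  have hΓ : (m : ℝ) + (u / 2 - 1) + 1 = (u + 2 * m) / 2 := by ring
  rw [div_rpow (by positivity) zero_le_two, mul_rpow hδ.le hx.le, hΓ, hδt, chiPDFReal, h2t, hxt,
    neg_div, div_pow]
  field_simp

theorem ncChiSqAtSq_integrand_eq_tsum {u δ x : ℝ} (hδ : 0 < δ) (hx : 0 < x) :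
    δ ^ (1 - u / 2) * exp (-δ ^ 2 / 2) *
        (x ^ (u / 2) * exp (-x ^ 2 / 2) * besselI (u / 2 - 1) (δ * x)) =
      ∑' m : ℕ, exp (-(δ ^ 2 / 2)) * (δ ^ 2 / 2) ^ m / m ! * chiPDFReal (u + 2 * m) x := by
  rw [besselI, ← tsum_mul_left, ← tsum_mul_left]
  exact tsum_congr (besselI_summand_eq_poisson_mul_chiPDFReal hδ hx)

theorem ncChiSqAtSq_eq_integral_poissonMeasure {u δ r : ℝ} (hu : 1 ≤ u) (hδ : 0 < δ)
    (hr : 0 < r) :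
    ncChiSqAtSq u δ r = ∫ m : ℕ, chiCDFReal (u + 2 * m) r ∂Po((δ ^ 2 / 2).toNNReal) := by
  have hk : ∀ m : ℕ, 1 ≤ u + 2 * m := fun m => by linarith [m.cast_nonneg (α := ℝ)]
  obtain ⟨C, hC⟩ := (strictAnti_chiCDFReal_add_two_mul hu hr).antitone.exists_forall_norm_le
    (bddBelow_range_chiCDFReal_add_two_mul (by linarith) hr.le)
  have hG_int : Integrable (fun m : ℕ => chiCDFReal (u + 2 * m) r) Po((δ ^ 2 / 2).toNNReal) :=
    integrable_of_forall_norm_le hC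
  have hlam : ((δ ^ 2 / 2).toNNReal : ℝ) = δ ^ 2 / 2 := coe_toNNReal _ (by positivity)
  have hsum : Summable fun m : ℕ =>
      exp (-(δ ^ 2 / 2)) * (δ ^ 2 / 2) ^ m / m ! * chiCDFReal (u + 2 * m) r := by
    have hG : ∀ m : ℕ, ‖chiCDFReal (u + 2 * m) r‖ = chiCDFReal (u + 2 * m) r :=
      fun m => norm_of_nonneg (chiCDFReal_nonneg (by linarith [hk m]) hr.le)
    simpa only [hlam, hG] using integrable_poissonMeasure_iff.1 hG_int
  rw [ncChiSqAtSq, ← intervalIntegral.integral_const_mul,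
    intervalIntegral.integral_congr_ae (.of_forall fun x hx =>
      ncChiSqAtSq_integrand_eq_tsum hδ (uIoc_of_le hr.le ▸ hx).1),
    intervalIntegral_tsum_of_nonneg hr.le
      (fun m => ((continuous_chiPDFReal (hk m)).const_mul _).intervalIntegrable _ _)
      (fun m x hx => mul_nonneg (by positivity) (chiPDFReal_nonneg (by linarith [hk m]) hx.1.le))
      (by simpa only [intervalIntegral.integral_const_mul, chiCDFReal] using hsum),
    integral_poissonMeasure]
  simp only [chiCDFReal, intervalIntegral.integral_const_mul, smul_eq_mul, hlam]

/-- For fixed `u ≥ 1` and `r > 0`, the noncentral chi-square cdf value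
`F_{u,δ}(r²)` is a strictly decreasing function of `δ` on `(0, ∞)`. -/
theorem ncChiSqAtSq_strictAnti (u r : ℝ) (hu : 1 ≤ u) (hr : 0 < r) :
    StrictAntiOn (fun δ => ncChiSqAtSq u δ r) (Set.Ioi 0) := by
  intro δ₁ hδ₁ δ₂ hδ₂ hδ
  simp only [ncChiSqAtSq_eq_integral_poissonMeasure hu hδ₁ hr,
    ncChiSqAtSq_eq_integral_poissonMeasure hu hδ₂ hr]
  refine strictAnti_integral_poissonMeasure (strictAnti_chiCDFReal_add_two_mul hu hr)
    (bddBelow_range_chiCDFReal_add_two_mul (by linarith) hr.le) ?_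
  have h₁ : 0 < δ₁ := hδ₁
  have h₂ : 0 < δ₂ := hδ₂
  rw [toNNReal_lt_toNNReal_iff (by positivity)]
  gcongr
end

section
/- For fixed u, r > 0, the probability that a u-dimensional standard Gaussian vector shifted by a vector of norm δ lies in the origin-centered ball of radius r is strictly decreasing in δ > 0. -/
/-!
Rotation invariance of the standard Gaussian lets us move the shift onto the first coordinate
axis, so the probability becomes `∫ γ {x | (x + δ)² ≤ r² - ‖y‖²} dγ(y)` with `y` the remaining
coordinates. For each `y` with `‖y‖ < r` the slice is an interval of fixed length centred
at `-δ`, and its Gaussian mass strictly decreases as the centre moves away from the mode; the set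
of such `y` has positive measure.
-/

open MeasureTheory ProbabilityTheory Set

lemma setOf_sq_add_le_eq_Icc {c : ℝ} (hc : 0 ≤ c) (δ : ℝ) :
    {x : ℝ | (x + δ) ^ 2 ≤ c} = Icc (-√c - δ) (√c - δ) := by
  ext x
  change (x + δ) ^ 2 ≤ c ↔ _
  rw [Real.sq_le hc, mem_Icc]
  constructor <;> rintro ⟨h₁, h₂⟩ <;> constructor <;> linarith

lemma pi_preimage_norm_add_single_le {n : ℕ} (m : Measure ℝ) [SigmaFinite m] {r : ℝ}
    (hr : 0 ≤ r) (δ : ℝ) :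
    Measure.pi (fun _ : Fin (n + 1) ↦ m) (WithLp.toLp 2 ⁻¹'
        {z : EuclideanSpace ℝ (Fin (n + 1)) | ‖z + EuclideanSpace.single 0 δ‖ ≤ r}) =
      m.prod (Measure.pi fun _ : Fin n ↦ m) {p | (p.1 + δ) ^ 2 + ∑ j, p.2 j ^ 2 ≤ r ^ 2} := by
  rw [← (measurePreserving_piFinSuccAbove (fun _ ↦ m) 0).measure_preimage
    (measurableSet_le (by fun_prop) measurable_const).nullMeasurableSet]
  congr 1
  ext z
  simp [← sq_le_sq₀ (norm_nonneg _) hr, EuclideanSpace.real_norm_sq_eq, Fin.sum_univ_succ,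
    Fin.tail]

namespace ProbabilityTheory

lemma gaussianPDFReal_lt_of_sq_lt {m : ℝ} {v : NNReal} (hv : v ≠ 0) {x y : ℝ}
    (h : (x - m) ^ 2 < (y - m) ^ 2) : gaussianPDFReal m v y < gaussianPDFReal m v x := by
  have : (0 : ℝ) < v := by positivity
  rw [gaussianPDFReal, gaussianPDFReal]
  gcongr

lemma isOpenPosMeasure_gaussianReal (m : ℝ) {v : NNReal} (hv : v ≠ 0) :
    (gaussianReal m v).IsOpenPosMeasure :=
  (gaussianReal_absolutelyContinuous' m hv).isOpenPosMeasure

lemma gaussianReal_setOf_sq_add_le_of_nonpos (m : ℝ) {v : NNReal} (hv : v ≠ 0) {c : ℝ}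
    (hc : c ≤ 0) (δ : ℝ) : gaussianReal m v {x : ℝ | (x + δ) ^ 2 ≤ c} = 0 := by
  have := nullSingletonClass_gaussianReal (μ := m) hv
  refine measure_mono_null (fun x hx ↦ ?_) (measure_singleton (-δ))
  exact eq_neg_of_add_eq_zero_left
    ((pow_eq_zero_iff two_ne_zero).1 (le_antisymm (le_trans hx hc) (sq_nonneg _)))

lemma gaussianReal_Icc_sub_strictAntiOn {v : NNReal} (hv : v ≠ 0) {a : ℝ} (ha : 0 < a) :
    StrictAntiOn (fun δ ↦ gaussianReal 0 v (Icc (-a - δ) (a - δ))) (Ici 0) := by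
  set f := gaussianPDFReal 0 v
  have hf : Continuous f := by unfold f gaussianPDFReal; fun_prop
  have hfi (s t : ℝ) : IntervalIntegrable f volume s t :=
    (integrable_gaussianPDFReal 0 v).intervalIntegrable
  set G : ℝ → ℝ := fun δ ↦ ∫ x in (-a - δ)..(a - δ), f x
  have hG (δ : ℝ) : HasDerivAt G (f (-a - δ) - f (a - δ)) δ := by
    have hF (x : ℝ) := (hf.integral_hasStrictDerivAt 0 x).hasDerivAt
    have hG_eq : G = fun δ ↦ (∫ x in 0..(a - δ), f x) - ∫ x in 0..(-a - δ), f x :=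
      funext fun δ ↦ (intervalIntegral.integral_interval_sub_left (hfi _ _) (hfi _ _)).symm
    rw [hG_eq]
    exact (((hF _).comp δ ((hasDerivAt_id δ).const_sub a)).sub
      ((hF _).comp δ ((hasDerivAt_id δ).const_sub (-a)))).congr_deriv (by simp; ring)
  have hG_anti : StrictAntiOn G (Ici 0) := by
    refine strictAntiOn_of_deriv_neg (convex_Ici 0)
      (fun δ _ ↦ (hG δ).continuousAt.continuousWithinAt) fun δ hδ ↦ ?_
    rw [interior_Ici] at hδ
    rw [(hG δ).deriv, sub_neg]
    exact gaussianPDFReal_lt_of_sq_lt hv (by nlinarith [mem_Ioi.1 hδ])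
  have hG_eq_measure (δ : ℝ) :
      gaussianReal 0 v (Icc (-a - δ) (a - δ)) = ENNReal.ofReal (G δ) := by
    rw [gaussianReal_apply_eq_integral 0 hv, integral_Icc_eq_integral_Ioc,
      ← intervalIntegral.integral_of_le (by linarith)]
  intro δ₁ h₁ δ₂ h₂ h₁₂
  simp only [hG_eq_measure]
  exact (ENNReal.ofReal_lt_ofReal_iff_of_nonneg
    (intervalIntegral.integral_nonneg (by linarith) fun x _ ↦ gaussianPDFReal_nonneg 0 v x)).2
    (hG_anti h₁ h₂ h₁₂)

lemma gaussianReal_prod_setOf_sq_add_le_strictAntiOn {Y : Type*} [MeasurableSpace Y]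
    {ν : Measure Y} [IsFiniteMeasure ν] {φ : Y → ℝ} (hφ : Measurable φ) {c : ℝ}
    (hν : ν {y | φ y < c} ≠ 0) {v : NNReal} (hv : v ≠ 0) :
    StrictAntiOn (fun δ ↦ (gaussianReal 0 v).prod ν {p | (p.1 + δ) ^ 2 + φ p.2 ≤ c})
      (Ici 0) := by
  intro δ₁ h₁ δ₂ h₂ h₁₂
  set B : ℝ → Set (ℝ × Y) := fun δ ↦ {p | (p.1 + δ) ^ 2 + φ p.2 ≤ c}
  have hB (δ : ℝ) : MeasurableSet (B δ) := measurableSet_le (by fun_prop) measurable_const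
  have hslice (δ : ℝ) (y : Y) : (fun x ↦ (x, y)) ⁻¹' B δ = {x | (x + δ) ^ 2 ≤ c - φ y} := by
    ext x
    simp [B, le_sub_iff_add_le]
  have hlt (y : Y) (hy : φ y < c) :
      gaussianReal 0 v ((fun x ↦ (x, y)) ⁻¹' B δ₂) <
        gaussianReal 0 v ((fun x ↦ (x, y)) ⁻¹' B δ₁) := by
    rw [hslice, hslice, setOf_sq_add_le_eq_Icc (by linarith),
      setOf_sq_add_le_eq_Icc (by linarith)]
    exact gaussianReal_Icc_sub_strictAntiOn hv (Real.sqrt_pos.2 (by linarith)) h₁ h₂ h₁₂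
  have hle (y : Y) :
      gaussianReal 0 v ((fun x ↦ (x, y)) ⁻¹' B δ₂) ≤
        gaussianReal 0 v ((fun x ↦ (x, y)) ⁻¹' B δ₁) := by
    rcases lt_or_ge (φ y) c with hy | hy
    · exact (hlt y hy).le
    · rw [hslice, gaussianReal_setOf_sq_add_le_of_nonpos 0 hv (by linarith)]
      exact zero_le
  change (gaussianReal 0 v).prod ν (B δ₂) < (gaussianReal 0 v).prod ν (B δ₁)
  rw [Measure.prod_apply_symm (hB δ₁), Measure.prod_apply_symm (hB δ₂)]
  refine lintegral_strict_mono_of_ae_le_of_ae_lt_on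
    (measurable_measure_prodMk_right (hB δ₁)).aemeasurable ?_ (ae_of_all _ hle) hν
    (ae_of_all _ hlt)
  rw [← Measure.prod_apply_symm (hB δ₂)]
  exact measure_ne_top _ _

lemma stdGaussian_setOf_norm_add_le_congr {E : Type*} [NormedAddCommGroup E]
    [InnerProductSpace ℝ E] [FiniteDimensional ℝ E] [MeasurableSpace E] [BorelSpace E]
    {a b : E} (h : ‖a‖ = ‖b‖) (r : ℝ) :
    stdGaussian E {z | ‖z + a‖ ≤ r} = stdGaussian E {z | ‖z + b‖ ≤ r} := by
  set T := Submodule.reflection (ℝ ∙ (a - b))ᗮ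
  have hT : T a = b := Submodule.reflection_sub h
  conv_rhs => rw [← stdGaussian_map T, Measure.map_apply T.continuous.measurable
    (measurableSet_le (by fun_prop) measurable_const)]
  congr 1
  ext z
  simp [← hT, ← map_add]

lemma pi_gaussianReal_preimage_norm_add_le {n : ℕ} {r : ℝ} (hr : 0 ≤ r)
    (a : EuclideanSpace ℝ (Fin (n + 1))) :
    Measure.pi (fun _ ↦ gaussianReal 0 1) (WithLp.toLp 2 ⁻¹' {z | ‖z + a‖ ≤ r}) =
      (gaussianReal 0 1).prod (Measure.pi fun _ : Fin n ↦ gaussianReal 0 1)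
        {p | (p.1 + ‖a‖) ^ 2 + ∑ j, p.2 j ^ 2 ≤ r ^ 2} := by
  have hpi (b : EuclideanSpace ℝ (Fin (n + 1))) :
      Measure.pi (fun _ ↦ gaussianReal 0 1) (WithLp.toLp 2 ⁻¹' {z | ‖z + b‖ ≤ r}) =
        stdGaussian _ {z | ‖z + b‖ ≤ r} := by
    rw [← map_pi_eq_stdGaussian, Measure.map_apply (by fun_prop)
      (measurableSet_le (by fun_prop) measurable_const)]
  rw [hpi, stdGaussian_setOf_norm_add_le_congr (b := EuclideanSpace.single 0 ‖a‖) (by simp),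
    ← hpi, pi_preimage_norm_add_single_le _ hr]

end ProbabilityTheory

theorem gaussian_ball_prob_strictAnti_general (u : ℕ) (hu : 0 < u) (r : ℝ) (hr : 0 < r)
    (μ₁ μ₂ : EuclideanSpace ℝ (Fin u)) (h12 : ‖μ₁‖ < ‖μ₂‖) :
    (Measure.pi fun _ : Fin u => gaussianReal 0 1) ((WithLp.toLp 2 : (Fin u → ℝ) → EuclideanSpace ℝ (Fin u)) ⁻¹'
        {z : EuclideanSpace ℝ (Fin u) | ‖z + μ₂‖ ≤ r}) <
      (Measure.pi fun _ : Fin u => gaussianReal 0 1) ((WithLp.toLp 2 : (Fin u → ℝ) → EuclideanSpace ℝ (Fin u)) ⁻¹'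
        {z : EuclideanSpace ℝ (Fin u) | ‖z + μ₁‖ ≤ r}) := by
  obtain ⟨n, rfl⟩ := Nat.exists_eq_add_one_of_ne_zero hu.ne'
  rw [pi_gaussianReal_preimage_norm_add_le hr.le, pi_gaussianReal_preimage_norm_add_le hr.le]
  have := isOpenPosMeasure_gaussianReal 0 one_ne_zero
  have hball : Measure.pi (fun _ : Fin n ↦ gaussianReal 0 1) {y | ∑ j, y j ^ 2 < r ^ 2} ≠ 0 :=
    (isOpen_lt (by fun_prop) continuous_const).measure_ne_zero _ ⟨0, by simpa using pow_pos hr 2⟩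
  exact gaussianReal_prod_setOf_sq_add_le_strictAntiOn (by fun_prop) hball one_ne_zero
    (norm_nonneg _) (norm_nonneg _) h12

/-- For fixed `u` and `r > 0`, the probability that a `u`-dimensional
standard Gaussian vector shifted by a vector of norm `δ` lies in the origin-centered
ball of radius `r` is strictly decreasing in `δ > 0`. -/
theorem gaussian_ball_prob_strictAnti (u : ℕ) (hu : 0 < u) (r : ℝ) (hr : 0 < r)
    (μ₁ μ₂ : EuclideanSpace ℝ (Fin u)) (h1 : 0 < ‖μ₁‖) (h12 : ‖μ₁‖ < ‖μ₂‖) :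
    (Measure.pi fun _ : Fin u => gaussianReal 0 1) ((WithLp.toLp 2 : (Fin u → ℝ) → EuclideanSpace ℝ (Fin u)) ⁻¹'
        {z : EuclideanSpace ℝ (Fin u) | ‖z + μ₂‖ ≤ r}) <
      (Measure.pi fun _ : Fin u => gaussianReal 0 1) ((WithLp.toLp 2 : (Fin u → ℝ) → EuclideanSpace ℝ (Fin u)) ⁻¹'
        {z : EuclideanSpace ℝ (Fin u) | ‖z + μ₁‖ ≤ r}) :=
  gaussian_ball_prob_strictAnti_general u hu r hr μ₁ μ₂ h12
end

section
/- For fixed u, v and c > 0, the power 1 - G_{u,v,δ}(c) of the F-test is a strictly increasing function of the noncentrality parameter δ > 0. -/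
/-- The cdf `F_{u,δ}` of a noncentral chi-square distribution with `u` degrees of freedom
and noncentrality `δ`, via the representation
`F_{u,δ}(r²) = δ^{1-u/2} e^{-δ²/2} ∫_0^r x^{u/2} e^{-x²/2} I_{u/2-1}(δx) dx`. -/
noncomputable def ncChiSqCDF (u δ t : ℝ) : ℝ :=
  δ ^ (1 - u / 2) * Real.exp (-δ ^ 2 / 2) *
    ∫ x in (0:ℝ)..Real.sqrt t, x ^ (u / 2) * Real.exp (-x ^ 2 / 2) * besselI (u / 2 - 1) (δ * x)

/-- The cdf `G_{u,v,δ}` of the noncentral F distribution: `G_{u,v,δ}(c) = E_V[F_{u,δ}(cuV/v)]`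
where `V ~ χ²(v)`, i.e. `V` has the Gamma distribution with shape `v/2` and rate `1/2`. -/
noncomputable def ncFCDF (u v δ c : ℝ) : ℝ :=
  ∫ x, ncChiSqCDF u δ (c * u * x / v) ∂(ProbabilityTheory.gammaMeasure (v / 2) (1 / 2))

/-!
Expanding the Bessel function termwise shows that `F_{u,δ}(r²)` is a Poisson mixture of chi
distribution functions: `F_{u,δ}(r²) = E[P(χ_{u+2N} ≤ r)]` with `N ~ Poisson(δ²/2)`.
Integration by parts gives `P(χ_{k+2} ≤ r) < P(χ_k ≤ r)` for `r > 0`, and averaging a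
decreasing sequence `c` with `c₁ < c₀` over a Poisson variable gives a strictly decreasing
function of the mean. So `F_{u,δ}(r²)` strictly decreases in `δ` for every `r > 0`, hence so
does its average `G_{u,v,δ}(c)` over the almost surely positive variable `V`.
-/

open MeasureTheory Set Real Finset ProbabilityTheory
open scoped Nat

namespace NoncentralF

lemma tsum_pow_div_factorial (l : ℝ) : ∑' n, l ^ n / n ! = exp l := by
  rw [exp_eq_exp_ℝ, NormedSpace.exp_eq_tsum_div]

lemma add_pow_div_factorial (x y : ℝ) (n : ℕ) :
    (x + y) ^ n / n ! = ∑ p ∈ antidiagonal n, x ^ p.1 / p.1 ! * (y ^ p.2 / p.2 !) := by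
  rw [(Commute.all x y).add_pow', Finset.sum_div]
  refine Finset.sum_congr rfl fun p hp => ?_
  rw [← mem_antidiagonal.mp hp, nsmul_eq_mul, Nat.cast_add_choose]
  field_simp

/-- `E[c N]` for `N` Poisson distributed with mean `l`. -/
noncomputable def poissonAverage (c : ℕ → ℝ) (l : ℝ) : ℝ :=
  exp (-l) * ∑' n, c n * (l ^ n / n !)

section PoissonAverage

variable {c : ℕ → ℝ}

lemma summable_mul_pow_div_factorial (hc0 : 0 ≤ c) {C : ℝ} (hC : ∀ n, c n ≤ C) (l : ℝ) :
    Summable fun n => c n * (l ^ n / n !) := by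
  refine .of_norm_bounded ((summable_pow_div_factorial |l|).mul_left C) fun n => ?_
  rw [norm_mul, Real.norm_of_nonneg (hc0 n), norm_div, norm_pow, Real.norm_natCast, norm_eq_abs]
  exact mul_le_mul_of_nonneg_right (hC n) (by positivity)

lemma poissonAverage_mem_Icc (hc0 : 0 ≤ c) (hc1 : ∀ n, c n ≤ 1) {l : ℝ} (hl : 0 ≤ l) :
    poissonAverage c l ∈ Set.Icc 0 1 := by
  refine ⟨mul_nonneg (exp_pos _).le (tsum_nonneg fun n => mul_nonneg (hc0 n) (by positivity)), ?_⟩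
  calc poissonAverage c l ≤ exp (-l) * ∑' n, l ^ n / n ! := by
        refine mul_le_mul_of_nonneg_left ?_ (exp_pos _).le
        exact (summable_mul_pow_div_factorial hc0 hc1 l).tsum_le_tsum
          (fun n => mul_le_of_le_one_left (by positivity) (hc1 n)) (summable_pow_div_factorial l)
    _ = 1 := by rw [tsum_pow_div_factorial, ← exp_add, neg_add_cancel, exp_zero]

lemma continuous_poissonAverage {X : Type*} [TopologicalSpace X] {c : ℕ → X → ℝ}
    (hc : ∀ n, Continuous (c n)) (hc0 : ∀ n x, 0 ≤ c n x) (hc1 : ∀ n x, c n x ≤ 1)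
    {l : ℝ} (hl : 0 ≤ l) : Continuous fun x => poissonAverage (fun n => c n x) l := by
  refine continuous_const.mul (continuous_tsum (fun n => (hc n).mul continuous_const)
    (summable_pow_div_factorial l) fun n x => ?_)
  rw [norm_mul, Real.norm_of_nonneg (hc0 n x), Real.norm_of_nonneg (by positivity)]
  exact mul_le_of_le_one_left (by positivity) (hc1 n x)

/-- Thinning: a Poisson variable of mean `l₂` is one of mean `l₁` plus an independent one of
mean `l₂ - l₁`, and `c` is antitone, so the Cauchy product compares the two averages termwise. -/
theorem poissonAverage_strictAntiOn (hc : Antitone c) (hc0 : 0 ≤ c) (h01 : c 1 < c 0) :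
    StrictAntiOn (poissonAverage c) (Ici 0) := by
  intro l₁ (hl₁ : 0 ≤ l₁) l₂ _ hl
  set d := l₂ - l₁
  have hd : 0 < d := sub_pos.mpr hl
  let w : ℕ × ℕ → ℝ := fun p => l₁ ^ p.1 / p.1 ! * (d ^ p.2 / p.2 !)
  have hw : ∀ p, 0 ≤ w p := fun p => by positivity
  have hf : Summable fun n => c n * (l₁ ^ n / n !) :=
    summable_mul_pow_div_factorial hc0 (fun n => hc n.zero_le) l₁
  have hfg : Summable fun p : ℕ × ℕ => c p.1 * (l₁ ^ p.1 / p.1 !) * (d ^ p.2 / p.2 !) :=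
    hf.mul_of_nonneg (summable_pow_div_factorial d)
      (fun n => mul_nonneg (hc0 n) (by positivity)) fun n => by positivity
  have hbinom : ∑' n, c n * (l₂ ^ n / n !) = ∑' n, ∑ p ∈ antidiagonal n, c n * w p := by
    refine tsum_congr fun n => ?_
    rw [← Finset.mul_sum, ← add_pow_div_factorial, add_sub_cancel]
  have hcauchy : exp d * ∑' n, c n * (l₁ ^ n / n !) =
      ∑' n, ∑ p ∈ antidiagonal n, c p.1 * w p := by
    rw [mul_comm, ← tsum_pow_div_factorial,
      hf.tsum_mul_tsum_eq_tsum_sum_antidiagonal (summable_pow_div_factorial d) hfg]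
    simp only [w, mul_assoc]
  have hsum : Summable fun n => ∑ p ∈ antidiagonal n, c p.1 * w p := by
    simpa only [w, mul_assoc] using summable_sum_mul_antidiagonal_of_summable_mul
      (f := fun n => c n * (l₁ ^ n / n !)) (g := fun n => d ^ n / n !) hfg
  have hlt : ∑' n, ∑ p ∈ antidiagonal n, c n * w p <
      ∑' n, ∑ p ∈ antidiagonal n, c p.1 * w p := by
    refine hsum.tsum_lt_tsum_of_nonneg (i := 1) ?_ ?_ ?_
    · exact fun n => sum_nonneg fun p _ => mul_nonneg (hc0 n) (hw p)
    · exact fun n => sum_le_sum fun p hp =>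
        mul_le_mul_of_nonneg_right (hc (Nat.le.intro (mem_antidiagonal.mp hp))) (hw p)
    · simp only [Nat.sum_antidiagonal_succ, Nat.antidiagonal_zero, sum_singleton, w]
      simpa using mul_lt_mul_of_pos_right h01 hd
  calc exp (-l₂) * ∑' n, c n * (l₂ ^ n / n !)
      < exp (-l₂) * (exp d * ∑' n, c n * (l₁ ^ n / n !)) := by
        rw [hbinom, hcauchy]; exact mul_lt_mul_of_pos_left hlt (exp_pos _)
    _ = exp (-l₁) * ∑' n, c n * (l₁ ^ n / n !) := by
        rw [← mul_assoc, ← exp_add, neg_add_eq_sub, sub_sub_cancel_left]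

end PoissonAverage

/-- The density of the chi distribution with `k` degrees of freedom (on `x > 0`). -/
noncomputable def chiPDF (k x : ℝ) : ℝ :=
  x ^ (k - 1) * exp (-x ^ 2 / 2) / (2 ^ (k / 2 - 1) * Gamma (k / 2))

noncomputable def chiCDF (k r : ℝ) : ℝ := ∫ x in (0 : ℝ)..r, chiPDF k x

section Chi

variable {k : ℝ}

lemma chiPDF_nonneg (hk : 0 < k) {x : ℝ} (hx : 0 ≤ x) : 0 ≤ chiPDF k x := by
  have := Gamma_pos_of_pos (half_pos hk)
  unfold chiPDF
  positivity

lemma intervalIntegrable_chiPDF (hk : 0 < k) (a b : ℝ) :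
    IntervalIntegrable (chiPDF k) volume a b :=
  ((intervalIntegral.intervalIntegrable_rpow' (by linarith)).mul_continuousOn
    (by fun_prop)).div_const _

lemma integral_Ioi_rpow_mul_exp_neg_sq_div_two (hk : 0 < k) :
    ∫ x in Ioi 0, x ^ (k - 1) * exp (-x ^ 2 / 2) = 2 ^ (k / 2 - 1) * Gamma (k / 2) := by
  have h := integral_rpow_mul_exp_neg_mul_rpow two_pos (q := k - 1) (by linarith)
    (one_half_pos (α := ℝ))
  simp only [rpow_two, sub_add_cancel, one_div, inv_rpow zero_le_two, neg_div,
    rpow_neg zero_le_two, inv_inv, neg_mul, inv_mul_eq_div] at h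
  simpa only [rpow_sub_one two_ne_zero, neg_div, div_eq_mul_inv, neg_mul] using h

lemma integral_Ioi_chiPDF (hk : 0 < k) : ∫ x in Ioi 0, chiPDF k x = 1 := by
  have := Gamma_pos_of_pos (half_pos hk)
  simp only [chiPDF]
  rw [integral_div, integral_Ioi_rpow_mul_exp_neg_sq_div_two hk]
  exact div_self (by positivity)

lemma continuous_chiCDF (hk : 0 < k) : Continuous (chiCDF k) :=
  intervalIntegral.continuous_primitive (intervalIntegrable_chiPDF hk) 0

lemma chiCDF_nonneg (hk : 0 < k) {r : ℝ} (hr : 0 ≤ r) : 0 ≤ chiCDF k r :=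
  intervalIntegral.integral_nonneg hr fun _ hx => chiPDF_nonneg hk hx.1

lemma chiCDF_le_one (hk : 0 < k) {r : ℝ} (hr : 0 ≤ r) : chiCDF k r ≤ 1 := by
  rw [chiCDF, intervalIntegral.integral_of_le hr, ← integral_Ioi_chiPDF hk]
  refine setIntegral_mono_set (.of_integral_ne_zero ?_) ?_ Ioc_subset_Ioi_self.eventuallyLE
  · rw [integral_Ioi_chiPDF hk]; exact one_ne_zero
  · filter_upwards [ae_restrict_mem measurableSet_Ioi] with x hx using chiPDF_nonneg hk hx.le

lemma hasDerivAt_chiPDF_sub_chiPDF_add_two (hk : 0 < k) {x : ℝ} (hx : 0 < x) :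
    HasDerivAt (fun x => x ^ k * exp (-x ^ 2 / 2) / (2 ^ (k / 2) * Gamma (k / 2 + 1)))
      (chiPDF k x - chiPDF (k + 2) x) x := by
  have hG := Gamma_pos_of_pos (half_pos hk)
  have hexp : HasDerivAt (fun x : ℝ => exp (-x ^ 2 / 2)) (exp (-x ^ 2 / 2) * -x) x := by
    convert ((hasDerivAt_pow 2 x).fun_neg.div_const 2).exp using 1
    ring
  refine (((hasDerivAt_rpow_const (Or.inl hx.ne')).fun_mul hexp).div_const _).congr_deriv ?_
  simp only [chiPDF]
  rw [show (k + 2) / 2 - 1 = k / 2 by ring, show (k + 2) / 2 = k / 2 + 1 by ring,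
    show k + 2 - 1 = k + 1 by ring, rpow_add_one hx.ne', rpow_sub_one hx.ne',
    rpow_sub_one two_ne_zero, Gamma_add_one (half_pos hk).ne']
  field_simp
  ring

lemma chiCDF_add_two (hk : 0 < k) {r : ℝ} (hr : 0 ≤ r) :
    chiCDF (k + 2) r =
      chiCDF k r - r ^ k * exp (-r ^ 2 / 2) / (2 ^ (k / 2) * Gamma (k / 2 + 1)) := by
  have hFTC := intervalIntegral.integral_eq_sub_of_hasDerivAt_of_le hr
    (f := fun x => x ^ k * exp (-x ^ 2 / 2) / (2 ^ (k / 2) * Gamma (k / 2 + 1)))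
    (by fun_prop (disch := positivity))
    (fun x hx => hasDerivAt_chiPDF_sub_chiPDF_add_two hk hx.1)
    ((intervalIntegrable_chiPDF hk 0 r).sub (intervalIntegrable_chiPDF (by positivity) 0 r))
  rw [intervalIntegral.integral_sub (intervalIntegrable_chiPDF hk 0 r)
    (intervalIntegrable_chiPDF (by positivity) 0 r), zero_rpow hk.ne', zero_mul, zero_div,
    sub_zero] at hFTC
  rw [chiCDF, chiCDF, ← hFTC, sub_sub_cancel]

lemma chiCDF_add_two_lt (hk : 0 < k) {r : ℝ} (hr : 0 < r) : chiCDF (k + 2) r < chiCDF k r := by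
  rw [chiCDF_add_two hk hr.le, sub_lt_self_iff]
  have := Gamma_pos_of_pos (by positivity : 0 < k / 2 + 1)
  positivity

lemma antitone_chiCDF_add_two_mul (hk : 0 < k) {r : ℝ} (hr : 0 < r) :
    Antitone fun m : ℕ => chiCDF (k + 2 * m) r :=
  antitone_nat_of_succ_le fun m => by
    rw [Nat.cast_succ, mul_add_one, ← add_assoc]
    exact (chiCDF_add_two_lt (by positivity) hr).le

end Chi

section NoncentralChiSq

variable {u δ : ℝ}

lemma mul_besselI_term_eq (hu : 0 < u) (hδ : 0 < δ) {x : ℝ} (hx : 0 < x) (m : ℕ) :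
    x ^ (u / 2) * exp (-x ^ 2 / 2) *
        ((δ * x / 2) ^ (u / 2 - 1 + 2 * (m : ℝ)) / (m ! * Gamma (m + (u / 2 - 1) + 1))) =
      δ ^ (u / 2 - 1) * (chiPDF (u + 2 * m) x * ((δ ^ 2 / 2) ^ m / m !)) := by
  have hG := Gamma_pos_of_pos (by positivity : 0 < (u + 2 * m) / 2)
  have h2m : (2 * m : ℝ) = (2 * m : ℕ) := by push_cast; ring
  rw [chiPDF, show (m : ℝ) + (u / 2 - 1) + 1 = (u + 2 * m) / 2 by ring,
    show (u + 2 * m) / 2 - 1 = u / 2 - 1 + m by ring,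
    show u + 2 * m - 1 = u / 2 + (u / 2 - 1) + 2 * m by ring, h2m,
    rpow_add_natCast (by positivity), rpow_add_natCast hx.ne', rpow_add hx,
    rpow_add_natCast two_ne_zero, div_rpow (by positivity) zero_le_two, mul_rpow hδ.le hx.le,
    div_pow, div_pow, mul_pow]
  field_simp
  ring

lemma mul_besselI_eq_tsum_chiPDF (hu : 0 < u) (hδ : 0 < δ) {x : ℝ} (hx : 0 < x) :
    x ^ (u / 2) * exp (-x ^ 2 / 2) * besselI (u / 2 - 1) (δ * x) =
      δ ^ (u / 2 - 1) * ∑' m : ℕ, chiPDF (u + 2 * m) x * ((δ ^ 2 / 2) ^ m / m !) := by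
  rw [besselI, ← tsum_mul_left, ← tsum_mul_left]
  exact tsum_congr (mul_besselI_term_eq hu hδ hx)

lemma ncChiSqCDF_eq_poissonAverage (hu : 0 < u) (hδ : 0 < δ) (t : ℝ) :
    ncChiSqCDF u δ t = poissonAverage (fun m => chiCDF (u + 2 * m) √t) (δ ^ 2 / 2) := by
  have hr : 0 ≤ √t := sqrt_nonneg t
  let F : ℕ → ℝ → ℝ := fun m x => chiPDF (u + 2 * m) x * ((δ ^ 2 / 2) ^ m / m !)
  have hF_int : ∀ m, IntegrableOn (F m) (Ioc 0 √t) :=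
    fun m => (intervalIntegrable_chiPDF (by positivity) 0 √t).1.mul_const _
  have hF_integral : ∀ m, ∫ x in Ioc 0 √t, F m x = chiCDF (u + 2 * m) √t * ((δ ^ 2 / 2) ^ m / m !) :=
    fun m => by rw [integral_mul_const, chiCDF, intervalIntegral.integral_of_le hr]
  have hF_norm : ∀ m, ∫ x in Ioc 0 √t, ‖F m x‖ = ∫ x in Ioc 0 √t, F m x := fun m =>
    setIntegral_congr_fun measurableSet_Ioc fun x hx =>
      norm_of_nonneg (mul_nonneg (chiPDF_nonneg (by positivity) hx.1.le) (by positivity))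
  have hF_sum : Summable fun m => ∫ x in Ioc 0 √t, ‖F m x‖ := by
    simp_rw [hF_norm, hF_integral]
    exact summable_mul_pow_div_factorial (fun m => chiCDF_nonneg (by positivity) hr)
      (fun m => chiCDF_le_one (by positivity) hr) _
  rw [ncChiSqCDF, poissonAverage, intervalIntegral.integral_of_le hr,
    setIntegral_congr_fun measurableSet_Ioc fun x hx => mul_besselI_eq_tsum_chiPDF hu hδ hx.1,
    integral_const_mul, ← integral_tsum_of_summable_integral_norm hF_int hF_sum]
  simp_rw [hF_integral]
  have hδu : δ ^ (1 - u / 2) * δ ^ (u / 2 - 1) = 1 := by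
    rw [← rpow_add hδ, sub_add_sub_cancel', sub_self, rpow_zero]
  rw [neg_div]
  linear_combination (exp (-(δ ^ 2 / 2)) *
    ∑' m : ℕ, chiCDF (u + 2 * m) √t * ((δ ^ 2 / 2) ^ m / m !)) * hδu

lemma ncChiSqCDF_mem_Icc (hu : 0 < u) (hδ : 0 < δ) (t : ℝ) : ncChiSqCDF u δ t ∈ Set.Icc 0 1 := by
  rw [ncChiSqCDF_eq_poissonAverage hu hδ]
  exact poissonAverage_mem_Icc (fun m => chiCDF_nonneg (by positivity) (sqrt_nonneg t))
    (fun m => chiCDF_le_one (by positivity) (sqrt_nonneg t)) (by positivity)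

lemma continuous_ncChiSqCDF (hu : 0 < u) (hδ : 0 < δ) : Continuous (ncChiSqCDF u δ) := by
  rw [funext (ncChiSqCDF_eq_poissonAverage hu hδ)]
  exact continuous_poissonAverage
    (fun m => (continuous_chiCDF (by positivity)).comp continuous_sqrt)
    (fun m t => chiCDF_nonneg (by positivity) (sqrt_nonneg t))
    (fun m t => chiCDF_le_one (by positivity) (sqrt_nonneg t)) (by positivity)

theorem ncChiSqCDF_strictAntiOn (hu : 0 < u) {t : ℝ} (ht : 0 < t) :
    StrictAntiOn (fun δ => ncChiSqCDF u δ t) (Ioi 0) := by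
  intro δ₁ (hδ₁ : 0 < δ₁) δ₂ (hδ₂ : 0 < δ₂) hδ
  have hr : 0 < √t := sqrt_pos.mpr ht
  simp only [ncChiSqCDF_eq_poissonAverage hu hδ₁, ncChiSqCDF_eq_poissonAverage hu hδ₂]
  refine poissonAverage_strictAntiOn (antitone_chiCDF_add_two_mul hu hr)
    (fun m => chiCDF_nonneg (by positivity) hr.le) ?_ (by positivity : (0 : ℝ) ≤ _)
    (by positivity : (0 : ℝ) ≤ _) (by gcongr)
  simpa using chiCDF_add_two_lt hu hr

end NoncentralChiSq

lemma ae_gammaMeasure_pos (a r : ℝ) : ∀ᵐ x ∂gammaMeasure a r, 0 < x := by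
  simp only [ae_iff, not_lt]
  change gammaMeasure a r (Iic 0) = 0
  rw [gammaMeasure, withDensity_apply _ measurableSet_Iic, ← setLIntegral_congr Iio_ae_eq_Iic,
    lintegral_gammaPDF_of_nonpos le_rfl]

lemma integral_lt_integral_of_ae_lt {α : Type*} [MeasurableSpace α] {μ : Measure α} [NeZero μ]
    {f g : α → ℝ} (hf : Integrable f μ) (hg : Integrable g μ) (h : ∀ᵐ x ∂μ, f x < g x) :
    ∫ x, f x ∂μ < ∫ x, g x ∂μ := by
  rw [← sub_pos, ← integral_sub hg hf, integral_pos_iff_support_of_nonneg_ae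
    (h.mono fun x hx => (sub_pos.mpr hx).le) (hg.sub hf)]
  have hsupp : Function.support (fun x => g x - f x) =ᵐ[μ] (univ : Set α) :=
    Filter.eventuallyEq_univ.mpr (h.mono fun x hx => (sub_pos.mpr hx).ne')
  rw [measure_congr hsupp]
  exact Measure.measure_univ_pos.mpr (NeZero.ne μ)

end NoncentralF

open NoncentralF in
/-- For fixed `u`, `v` and `c > 0`, the power `1 - G_{u,v,δ}(c)` of the
F-test is a strictly increasing function of the noncentrality parameter `δ > 0`. -/
theorem power_strictMono_of_noncentrality (u v : ℕ) (hu : 0 < u) (hv : 0 < v)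
    (c : ℝ) (hc : 0 < c) :
    StrictMonoOn (fun δ => 1 - ncFCDF u v δ c) (Set.Ioi 0) := by
  have := isProbabilityMeasure_gammaMeasure (a := v / 2) (r := 1 / 2) (by positivity)
    (by positivity)
  have hu' : (0 : ℝ) < u := Nat.cast_pos.mpr hu
  have hint : ∀ δ > 0, Integrable (fun x => ncChiSqCDF u δ (c * u * x / v))
      (gammaMeasure (v / 2) (1 / 2)) := fun δ hδ =>
    .of_bound ((continuous_ncChiSqCDF hu' hδ).comp (by fun_prop)).aestronglyMeasurable 1
      (ae_of_all _ fun x => by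
        obtain ⟨h0, h1⟩ := ncChiSqCDF_mem_Icc hu' hδ (c * u * x / v)
        rwa [norm_of_nonneg h0])
  intro δ₁ hδ₁ δ₂ hδ₂ hδ
  refine sub_lt_sub_left (integral_lt_integral_of_ae_lt (hint δ₂ hδ₂) (hint δ₁ hδ₁) ?_) 1
  filter_upwards [ae_gammaMeasure_pos _ _] with x hx
  exact ncChiSqCDF_strictAntiOn hu' (by positivity) hδ₁ hδ₂ hδ
end
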